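/- Let P be a set of n points in general position in R^d. Suppose x is the lexicographic minimum of the intersection conv(A_1) ∩ ... ∩ conv(A_d), where A_1, ..., A_d are disjoint subsets of P, and suppose x lies in the interior of conv(A_j) for some j with |A_j| = d+1. Then x is also the lexicographic minimum of the intersection of conv(A_i) over all i ≠ j. -/

import Mathlib

/-- Lexicographic strict order on `ℝ^d`. -/
def LexLt {d : ℕ} (x y : Fin d → ℝ) : Prop :=
  ∃ i : Fin d, (∀ j : Fin d, j < i → x j = y j) ∧ x i < y i

/-- `m` is the lexicographic minimum of `S`. -/
def IsLexMin {d : ℕ} (S : Set (Fin d → ℝ)) (m : Fin d → ℝ) : Prop :=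
  m ∈ S ∧ ∀ x ∈ S, m = x ∨ LexLt m x

/-!
Lexicographic minimality is a local property of convex sets: if some point `y` of a convex
set `S` were lexicographically below `x ∈ S`, then so would be every point of the segment from
`x` towards `y` other than `x`, and those close to `x` lie in any prescribed neighbourhood of `x`.
Since `x` is interior to `conv(A_j)`, near `x` the intersection of all hulls coincides with the
intersection of the hulls other than `conv(A_j)`, so the two intersections have the same
lexicographic minimum.
-/

open Filter Topology

section Lex

variable {d : ℕ}

/-- `LexLt` is definitionally the strict order of `Lex (Fin d → ℝ)`, which is linear. -/
theorem isLexMin_iff {S : Set (Fin d → ℝ)} {m : Fin d → ℝ} :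
    IsLexMin S m ↔ m ∈ S ∧ ∀ y ∈ S, ¬ LexLt y m := by
  refine and_congr_right fun _ => forall₂_congr fun y _ => ?_
  exact (not_lt.trans (le_iff_eq_or_lt.trans (or_congr_left toLex_inj))).symm

theorem lexLt_lineMap_left {x y : Fin d → ℝ} (h : LexLt y x) {t : ℝ} (ht : 0 < t) :
    LexLt (AffineMap.lineMap x y t) x := by
  obtain ⟨i, heq, hlt⟩ := h
  refine ⟨i, fun k hk => ?_, ?_⟩
  · rw [AffineMap.pi_lineMap_apply, heq k hk, AffineMap.lineMap_same_apply]
  · rwa [AffineMap.pi_lineMap_apply, lineMap_lt_left_iff_lt ht]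

theorem IsLexMin.of_inter_nhds {S K : Set (Fin d → ℝ)} {x : Fin d → ℝ} (hS : Convex ℝ S)
    (hx : IsLexMin (S ∩ K) x) (hK : K ∈ 𝓝 x) : IsLexMin S x := by
  rw [isLexMin_iff] at hx ⊢
  refine ⟨hx.1.1, fun y hy hyx => ?_⟩
  have hnear : ∀ᶠ t in 𝓝[>] (0 : ℝ), AffineMap.lineMap x y t ∈ K ∧ t < 1 := by
    refine (Filter.Tendsto.eventually ?_ hK).and ?_
    · exact (AffineMap.lineMap_continuous.tendsto' 0 x
        (AffineMap.lineMap_apply_zero x y)).mono_left nhdsWithin_le_nhds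
    · exact nhdsWithin_le_nhds (eventually_lt_nhds one_pos)
  obtain ⟨t, ⟨htK, ht1⟩, ht0⟩ := (hnear.and self_mem_nhdsWithin).exists
  exact hx.2 _ ⟨hS.lineMap_mem hx.1.1 hy ⟨ht0.le, ht1.le⟩, htK⟩ (lexLt_lineMap_left hyx ht0)

end Lex

theorem lex_min_drop_interior_set_general (d : ℕ)
    (A : Fin d → Finset (Fin d → ℝ))
    (x : Fin d → ℝ)
    (hx : IsLexMin (⋂ i, convexHull ℝ (A i : Set (Fin d → ℝ))) x)
    (j : Fin d)
    (hint : x ∈ interior (convexHull ℝ (A j : Set (Fin d → ℝ)))) :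
    IsLexMin (⋂ i ∈ ({j}ᶜ : Set (Fin d)), convexHull ℝ (A i : Set (Fin d → ℝ))) x := by
  have hsplit : ⋂ i, convexHull ℝ (A i : Set (Fin d → ℝ)) =
      (⋂ i ∈ ({j}ᶜ : Set (Fin d)), convexHull ℝ (A i : Set (Fin d → ℝ))) ∩
        convexHull ℝ (A j : Set (Fin d → ℝ)) :=
    (iInf_split_single _ j).trans (inf_comm _ _)
  exact IsLexMin.of_inter_nhds (convex_iInter₂ fun i _ => convex_convexHull ℝ _) (hsplit ▸ hx)
    (mem_interior_iff_mem_nhds.mp hint)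

/-- if `x` is the lexicographic minimum of `⋂ᵢ conv(Aᵢ)` for disjoint
subsets `A₁,…,A_d` of a point set `P` in general position, and `x` lies in the
interior of `conv(A_j)` where `|A_j| = d+1`, then `x` is also the lexicographic
minimum of the intersection of the remaining `d-1` convex hulls. -/
theorem lex_min_drop_interior_set (d : ℕ) (P : Finset (Fin d → ℝ))
    (hgen : ∀ T : Finset (Fin d → ℝ), T ⊆ P → T.card = d + 1 →
      AffineIndependent ℝ (fun x : T => (x : Fin d → ℝ)))
    (A : Fin d → Finset (Fin d → ℝ))
    (hsub : ∀ i, A i ⊆ P)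
    (hdisj : ∀ i j, i ≠ j → Disjoint (A i) (A j))
    (x : Fin d → ℝ)
    (hx : IsLexMin (⋂ i, convexHull ℝ (A i : Set (Fin d → ℝ))) x)
    (j : Fin d) (hcard : (A j).card = d + 1)
    (hint : x ∈ interior (convexHull ℝ (A j : Set (Fin d → ℝ)))) :
    IsLexMin (⋂ i ∈ ({j}ᶜ : Set (Fin d)), convexHull ℝ (A i : Set (Fin d → ℝ))) x :=
  lex_min_drop_interior_set_general d A x hx j hint
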